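/- arXiv:math/0203291 — 3 statements merged into one kernel-verified Lean document; each statement's English description precedes it below -/
import Mathlib

section
/- If (a,b,c) is a primitive Pythagorean triple (a² + b² = c², gcd(|a|,b,c)=1, b,c > 0) and p > 2 is a prime dividing c − a, then p² divides c − a. -/
/-- If (a,b,c) is a primitive Pythagorean triple and p > 2 is a prime
dividing c − a, then p² divides c − a. -/
theorem stmt_3 (a b c : ℤ) (h : a ^ 2 + b ^ 2 = c ^ 2) (hb : 0 < b) (hc : 0 < c)
    (hgcd : Nat.gcd a.natAbs (Nat.gcd b.natAbs c.natAbs) = 1)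
    (p : ℤ) (hp : Prime p) (hp2 : 2 < p) (hdvd : p ∣ c - a) :
    p ^ 2 ∣ c - a := by
  have hb2 : b ^ 2 = (c - a) * (c + a) := by ring_nf; linarith
  have hpb : p ∣ b := by
    apply hp.dvd_of_dvd_pow (n := 2)
    rw [hb2]
    exact Dvd.dvd.mul_right hdvd _
  have hnot : ¬ p ∣ (c + a) := by
    intro hca
    have h2c : p ∣ 2 * c := by
      have : 2 * c = (c - a) + (c + a) := by ring
      rw [this]; exact dvd_add hdvd hca
    have h2a : p ∣ 2 * a := by
      have : 2 * a = (c + a) - (c - a) := by ring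
      rw [this]; exact dvd_sub hca hdvd
    have hnp2 : ¬ p ∣ 2 := fun h2 => by
      have := Int.le_of_dvd (by norm_num) h2
      omega
    have hpc : p ∣ c := (hp.dvd_mul.mp h2c).resolve_left hnp2
    have hpa : p ∣ a := (hp.dvd_mul.mp h2a).resolve_left hnp2
    have hna : p.natAbs ∣ a.natAbs := Int.natAbs_dvd_natAbs.mpr hpa
    have hnb : p.natAbs ∣ b.natAbs := Int.natAbs_dvd_natAbs.mpr hpb
    have hnc : p.natAbs ∣ c.natAbs := Int.natAbs_dvd_natAbs.mpr hpc
    have : p.natAbs ∣ 1 := hgcd ▸ Nat.dvd_gcd hna (Nat.dvd_gcd hnb hnc)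
    have := Nat.le_of_dvd one_pos this
    have : 2 ≤ p.natAbs := by omega
    omega
  have hcop : IsCoprime p (c + a) :=
    (Prime.coprime_iff_not_dvd hp).mpr hnot
  have hcop2 : IsCoprime (p ^ 2) (c + a) := hcop.pow_left
  have hpb2 : p ^ 2 ∣ (c - a) * (c + a) := by
    rw [← hb2]; exact pow_dvd_pow_of_dvd hpb 2
  exact hcop2.dvd_of_dvd_mul_right hpb2
end

section
/- The number of integer solutions (a,b,c) of a² + b² = c² with c ≠ 0 and |a|, |b|, |c| ≤ N is at most k₁ · N · (log N + 1) for some absolute constant k₁ and all N ≥ 2. -/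
/-!
Up to the signs of its entries, a solution is a triple of naturals `(a, b, c)` with `c ≥ 1`.
If `b = 0` then `a = c`; otherwise `(c - a)(c + a) = b ^ 2` forces `c - a = g s²` and
`c + a = g t²` for a common `g`, and `(a, b, c) = (g (t² - s²)/2, g s t, g (t² + s²)/2)`.
So these solutions are images of triples `(g, s, t)` with `g s², g t² ≤ 2N`, of which there are
at most `∑_{g ≤ 2N} 2N/g ≤ 2N (1 + log 2N)`.
-/

open Finset

theorem exists_common_mul_sq_of_mul_eq_sq {u v b : ℕ} (h : u * v = b ^ 2) :
    ∃ g s t : ℕ, u = g * s ^ 2 ∧ v = g * t ^ 2 := by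
  rcases Nat.eq_zero_or_pos (u.gcd v) with h0 | hpos
  · obtain ⟨rfl, rfl⟩ := Nat.gcd_eq_zero_iff.1 h0
    exact ⟨0, 0, 0, rfl, rfl⟩
  obtain ⟨g, u, v, hg, hcop, rfl, rfl⟩ := Nat.exists_coprime' hpos
  obtain ⟨e, rfl⟩ : g ∣ b := (Nat.pow_dvd_pow_iff two_ne_zero).1 ⟨u * v, by rw [← h]; ring⟩
  have he : u * v = e ^ 2 :=
    Nat.eq_of_mul_eq_mul_left (pow_pos hg 2) (by rw [← mul_pow, ← h]; ring)
  obtain ⟨s, rfl⟩ := exists_eq_pow_of_mul_eq_pow (Nat.isUnit_iff.2 hcop) he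
  obtain ⟨t, rfl⟩ :=
    exists_eq_pow_of_mul_eq_pow (Nat.isUnit_iff.2 hcop.symm) ((mul_comm _ _).trans he)
  exact ⟨g, s, t, mul_comm _ _, mul_comm _ _⟩

theorem card_le_eight_mul_card_image_natAbs (s : Finset (ℤ × ℤ × ℤ)) :
    s.card ≤ 8 * (s.image fun t => (t.1.natAbs, t.2.1.natAbs, t.2.2.natAbs)).card := by
  set signs : Finset ℤ := {1, -1}
  have exists_sign (x : ℤ) : ∃ ε ∈ signs, ε * x.natAbs = x := by
    rcases Int.natAbs_eq x with h | h
    · exact ⟨1, by simp [signs], by omega⟩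
    · exact ⟨-1, by simp [signs], by omega⟩
  calc s.card
      ≤ (((signs ×ˢ signs ×ˢ signs) ×ˢ
          s.image fun t => (t.1.natAbs, t.2.1.natAbs, t.2.2.natAbs)).image
          fun p => (p.1.1 * (p.2.1 : ℤ), p.1.2.1 * (p.2.2.1 : ℤ), p.1.2.2 * (p.2.2.2 : ℤ))).card :=
        card_le_card ?_
    _ ≤ 8 * (s.image fun t => (t.1.natAbs, t.2.1.natAbs, t.2.2.natAbs)).card :=
        card_image_le.trans (by simp [signs])
  rintro ⟨a, b, c⟩ ht
  obtain ⟨εa, hεa, ha⟩ := exists_sign a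
  obtain ⟨εb, hεb, hb⟩ := exists_sign b
  obtain ⟨εc, hεc, hc⟩ := exists_sign c
  exact mem_image.2 ⟨((εa, εb, εc), (a.natAbs, b.natAbs, c.natAbs)),
    mem_product.2 ⟨by simp [hεa, hεb, hεc], mem_image_of_mem _ ht⟩, by simp only [ha, hb, hc]⟩

-- The triples `⟨g, s, t⟩` of positive integers with `g * s ^ 2 ≤ M` and `g * t ^ 2 ≤ M`.
def scaledSquarePairs (M : ℕ) : Finset (Σ _ : ℕ, ℕ × ℕ) :=
  (Icc 1 M).sigma fun g => Icc 1 (Nat.sqrt (M / g)) ×ˢ Icc 1 (Nat.sqrt (M / g))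

theorem mem_scaledSquarePairs {M g s t : ℕ} (hg : 0 < g) (hs : 0 < s) (ht : 0 < t)
    (hgs : g * s ^ 2 ≤ M) (hgt : g * t ^ 2 ≤ M) : ⟨g, s, t⟩ ∈ scaledSquarePairs M := by
  have le_sqrt {r : ℕ} (h : g * r ^ 2 ≤ M) : r ≤ Nat.sqrt (M / g) :=
    Nat.le_sqrt'.2 ((Nat.le_div_iff_mul_le hg).2 (by linarith))
  simp only [scaledSquarePairs, mem_sigma, mem_product, mem_Icc]
  exact ⟨⟨hg, le_trans (Nat.le_mul_of_pos_right g (by positivity)) hgs⟩,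
    ⟨hs, le_sqrt hgs⟩, ⟨ht, le_sqrt hgt⟩⟩

theorem card_scaledSquarePairs_le (M : ℕ) :
    ((scaledSquarePairs M).card : ℝ) ≤ M * (1 + Real.log M) := by
  have hterm (g : ℕ) : ((Nat.sqrt (M / g) * Nat.sqrt (M / g) : ℕ) : ℝ) ≤ (M : ℝ) * (g : ℝ)⁻¹ :=
    calc ((Nat.sqrt (M / g) * Nat.sqrt (M / g) : ℕ) : ℝ) ≤ ((M / g : ℕ) : ℝ) := by
          exact_mod_cast Nat.sqrt_le _
      _ ≤ (M : ℝ) / g := Nat.cast_div_le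
      _ = (M : ℝ) * (g : ℝ)⁻¹ := div_eq_mul_inv _ _
  calc ((scaledSquarePairs M).card : ℝ)
      = ∑ g ∈ Icc 1 M, ((Nat.sqrt (M / g) * Nat.sqrt (M / g) : ℕ) : ℝ) := by
        simp [scaledSquarePairs, card_sigma]
    _ ≤ ∑ g ∈ Icc 1 M, (M : ℝ) * (g : ℝ)⁻¹ := sum_le_sum fun g _ => hterm g
    _ = M * harmonic M := by simp [harmonic_eq_sum_Icc, mul_sum]
    _ ≤ M * (1 + Real.log M) := by
        gcongr
        exact harmonic_le_one_add_log M

def tripleOfScaledSquares (x : Σ _ : ℕ, ℕ × ℕ) : ℕ × ℕ × ℕ :=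
  ((x.1 * x.2.2 ^ 2 - x.1 * x.2.1 ^ 2) / 2, x.1 * x.2.1 * x.2.2,
    (x.1 * x.2.2 ^ 2 + x.1 * x.2.1 ^ 2) / 2)

theorem exists_tripleOfScaledSquares_eq {a b c N : ℕ} (h : a ^ 2 + b ^ 2 = c ^ 2) (hb : 0 < b)
    (hcN : c ≤ N) :
    ∃ x ∈ scaledSquarePairs (2 * N), tripleOfScaledSquares x = (a, b, c) := by
  have hac : a < c := by nlinarith
  have hprod : (c - a) * (c + a) = b ^ 2 := by
    have hz : (a : ℤ) ^ 2 + b ^ 2 = c ^ 2 := by exact_mod_cast h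
    zify [hac.le]
    linear_combination -hz
  obtain ⟨g, s, t, hs, ht⟩ := exists_common_mul_sq_of_mul_eq_sq hprod
  have hb_eq : b = g * s * t := by
    refine Nat.pow_left_injective two_ne_zero ?_
    simp only [← hprod, hs, ht]
    ring
  obtain ⟨⟨hg, hs0⟩, ht0⟩ : (0 < g ∧ 0 < s) ∧ 0 < t := by
    simpa only [hb_eq, CanonicallyOrderedAdd.mul_pos] using hb
  refine ⟨⟨g, s, t⟩, mem_scaledSquarePairs hg hs0 ht0 (by omega) (by omega), ?_⟩
  simp only [tripleOfScaledSquares, ← hs, ← ht, hb_eq]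
  refine Prod.ext ?_ (Prod.ext rfl ?_) <;> simp only <;> omega

def natPythagoreanTriples (N : ℕ) : Finset (ℕ × ℕ × ℕ) :=
  (range (N + 1) ×ˢ range (N + 1) ×ˢ Icc 1 N).filter fun t => t.1 ^ 2 + t.2.1 ^ 2 = t.2.2 ^ 2

theorem card_natPythagoreanTriples_le (N : ℕ) :
    (natPythagoreanTriples N).card ≤ N + (scaledSquarePairs (2 * N)).card := by
  calc (natPythagoreanTriples N).card
      ≤ ((Icc 1 N).image (fun c => (c, 0, c)) ∪
          (scaledSquarePairs (2 * N)).image tripleOfScaledSquares).card := card_le_card ?_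
    _ ≤ N + (scaledSquarePairs (2 * N)).card :=
        (card_union_le _ _).trans (add_le_add (card_image_le.trans (by simp)) card_image_le)
  rintro ⟨a, b, c⟩ habc
  simp only [natPythagoreanTriples, mem_filter, mem_product, mem_range, mem_Icc] at habc
  obtain ⟨⟨-, -, hc, hcN⟩, h⟩ := habc
  rw [mem_union, mem_image, mem_image]
  rcases Nat.eq_zero_or_pos b with rfl | hb
  · have hac : a = c := Nat.pow_left_injective two_ne_zero (by simpa using h)
    exact Or.inl ⟨c, mem_Icc.2 ⟨hc, hcN⟩, by rw [hac]⟩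
  · exact Or.inr (exists_tripleOfScaledSquares_eq h hb hcN)

noncomputable def pythagoreanTriples (N : ℕ) : Finset (ℤ × ℤ × ℤ) :=
  ((Finset.Icc (-(N : ℤ)) N) ×ˢ (Finset.Icc (-(N : ℤ)) N) ×ˢ (Finset.Icc (-(N : ℤ)) N)).filter
    fun t => t.1 ^ 2 + t.2.1 ^ 2 = t.2.2 ^ 2 ∧ t.2.2 ≠ 0

theorem image_natAbs_pythagoreanTriples_subset (N : ℕ) :
    (pythagoreanTriples N).image (fun t => (t.1.natAbs, t.2.1.natAbs, t.2.2.natAbs)) ⊆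
      natPythagoreanTriples N := by
  intro x hx
  obtain ⟨⟨a, b, c⟩, ht, rfl⟩ := mem_image.1 hx
  simp only [pythagoreanTriples, mem_filter, mem_product, mem_Icc] at ht
  obtain ⟨⟨⟨ha, ha'⟩, ⟨hb, hb'⟩, hc, hc'⟩, h, hc0⟩ := ht
  simp only [natPythagoreanTriples, mem_filter, mem_product, mem_range, mem_Icc]
  refine ⟨⟨by omega, by omega, by omega, by omega⟩, ?_⟩
  zify
  simpa only [Int.natCast_natAbs, sq_abs] using h

/-- The number of integer solutions of a² + b² = c², c ≠ 0, with
|a|, |b|, |c| ≤ N is at most k₁ · N · (log N + 1). -/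
theorem stmt_5 :
    ∃ k₁ : ℝ, ∀ N : ℕ, 2 ≤ N →
      ((((Finset.Icc (-(N : ℤ)) N) ×ˢ (Finset.Icc (-(N : ℤ)) N) ×ˢ
          (Finset.Icc (-(N : ℤ)) N)).filter
          (fun t => t.1 ^ 2 + t.2.1 ^ 2 = t.2.2 ^ 2 ∧ t.2.2 ≠ 0)).card : ℝ) ≤
        k₁ * N * (Real.log N + 1) := by
  refine ⟨40, fun N _ => ?_⟩
  change ((pythagoreanTriples N).card : ℝ) ≤ _
  have hcount : ((pythagoreanTriples N).card : ℝ) ≤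
      ((8 * (N + (scaledSquarePairs (2 * N)).card) : ℕ) : ℝ) := Nat.cast_le.2 <|
    (card_le_eight_mul_card_image_natAbs _).trans <| Nat.mul_le_mul_left 8 <|
      (card_le_card (image_natAbs_pythagoreanTriples_subset N)).trans
        (card_natPythagoreanTriples_le N)
  have hpairs := card_scaledSquarePairs_le (2 * N)
  have hlog : Real.log (2 * N) ≤ 1 + Real.log N := by
    rw [Real.log_mul two_ne_zero (by positivity)]
    linarith [Real.log_two_lt_d9]
  have hlogN := Real.log_natCast_nonneg N
  push_cast at hcount hpairs
  nlinarith
end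

section
/- The number of integer solutions (a,b,c) of a² + b² = c² with c ≠ 0 and |a|, |b|, |c| ≤ N is at least k₂ · N · log N for some absolute constant k₂ > 0 and all sufficiently large N. -/
open Finset

lemma sum_inv_sq_le (K : ℕ) : ∑ b ∈ Icc 1 K, ((b : ℝ) ^ 2)⁻¹ ≤ 2 := by
  have h := sum_Ioo_inv_sq_le (α := ℝ) 0 (K + 1)
  have he : Icc 1 K = Ioo 0 (K + 1) := by ext x; simp; omega
  rw [he]
  simpa using h

lemma sf_sum_lb (K : ℕ) :
    ∑ n ∈ Icc 1 K, (n : ℝ)⁻¹ ≤ 2 * ∑ d ∈ (Icc 1 K).filter Squarefree, (d : ℝ)⁻¹ := by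
  classical
  -- decomposition function
  have hex : ∀ n : ℕ, ∃ ab : ℕ × ℕ, ab.2 ^ 2 * ab.1 = n ∧ Squarefree ab.1 := by
    intro n
    obtain ⟨a, b, h1, h2⟩ := Nat.sq_mul_squarefree n
    exact ⟨(a, b), h1, h2⟩
  choose g hg1 hg2 using hex
  have key : ∀ n ∈ Icc 1 K, (g n).1 ∈ (Icc 1 K).filter Squarefree ∧ (g n).2 ∈ Icc 1 K := by
    intro n hn
    rw [mem_Icc] at hn
    have h1 := hg1 n
    have h2 := hg2 n
    have ha : 0 < (g n).1 := (hg2 n).ne_zero.bot_lt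
    have hb : 0 < (g n).2 := by
      rcases Nat.eq_zero_or_pos (g n).2 with h | h
      · rw [h] at h1; simp at h1; omega
      · exact h
    constructor
    · rw [mem_filter, mem_Icc]
      refine ⟨⟨ha, ?_⟩, h2⟩
      calc (g n).1 ≤ (g n).2 ^ 2 * (g n).1 := Nat.le_mul_of_pos_left _ (by positivity)
        _ = n := h1
        _ ≤ K := hn.2
    · rw [mem_Icc]
      refine ⟨hb, ?_⟩
      calc (g n).2 ≤ (g n).2 ^ 2 := Nat.le_self_pow (by norm_num) _
        _ ≤ (g n).2 ^ 2 * (g n).1 := Nat.le_mul_of_pos_right _ ha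
        _ = n := h1
        _ ≤ K := hn.2
  have hinj : Set.InjOn g (Icc 1 K : Finset ℕ) := by
    intro x hx y hy hxy
    have := hg1 x
    rw [hxy, hg1 y] at this
    exact this.symm
  calc ∑ n ∈ Icc 1 K, (n : ℝ)⁻¹
      = ∑ n ∈ Icc 1 K, (((g n).1 : ℝ)⁻¹ * (((g n).2 : ℝ) ^ 2)⁻¹) := by
        refine Finset.sum_congr rfl fun n hn => ?_
        rw [← mul_inv]
        congr 1
        have hnat : (g n).1 * (g n).2 ^ 2 = n := (mul_comm _ _).trans (hg1 n)
        have h : ((g n).1 : ℝ) * ((g n).2 : ℝ) ^ 2 = (n : ℝ) := by exact_mod_cast hnat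
        rw [← h]
    _ = ∑ p ∈ (Icc 1 K).image g, ((p.1 : ℝ)⁻¹ * ((p.2 : ℝ) ^ 2)⁻¹) := by
        rw [Finset.sum_image (fun x hx y hy h => hinj hx hy h)]
    _ ≤ ∑ p ∈ ((Icc 1 K).filter Squarefree) ×ˢ Icc 1 K, ((p.1 : ℝ)⁻¹ * ((p.2 : ℝ) ^ 2)⁻¹) := by
        refine Finset.sum_le_sum_of_subset_of_nonneg ?_ (fun p _ _ => by positivity)
        intro p hp
        rw [Finset.mem_image] at hp
        obtain ⟨n, hn, rfl⟩ := hp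
        rw [Finset.mem_product]
        exact key n hn
    _ = (∑ d ∈ (Icc 1 K).filter Squarefree, (d : ℝ)⁻¹) * ∑ b ∈ Icc 1 K, ((b : ℝ) ^ 2)⁻¹ := by
        rw [Finset.sum_product, Finset.sum_mul_sum]
    _ ≤ (∑ d ∈ (Icc 1 K).filter Squarefree, (d : ℝ)⁻¹) * 2 := by
        refine mul_le_mul_of_nonneg_left (sum_inv_sq_le K) ?_
        positivity
    _ = 2 * ∑ d ∈ (Icc 1 K).filter Squarefree, (d : ℝ)⁻¹ := by ring
lemma harmonic_lb (K : ℕ) : Real.log (K + 1) ≤ ∑ n ∈ Icc 1 K, (n : ℝ)⁻¹ := by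
  have h := log_add_one_le_harmonic K
  rw [harmonic_eq_sum_Icc] at h
  push_cast at h
  exact h
lemma term_lb {N d : ℕ} (hd : 1 ≤ d) (hdN : 256 * d ≤ N) :
    (N : ℝ) / (64 * d) ≤ ((Nat.sqrt (N / (2 * d)) / 2 : ℕ) : ℝ) ^ 2 := by
  set x := N / (2 * d) with hx
  set s := Nat.sqrt x with hs
  set r := s / 2 with hr
  have hd0 : (0:ℝ) < d := by exact_mod_cast hd
  have hx128 : 128 ≤ x := by
    rw [hx, Nat.le_div_iff_mul_le (by omega)]
    omega
  -- real lower bound on x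
  have hxr : (N : ℝ) / (2 * d) - 1 ≤ (x : ℝ) := by
    have h1 : 2 * d * x + N % (2 * d) = N := Nat.div_add_mod N (2 * d)
    have h2 : N % (2 * d) < 2 * d := Nat.mod_lt _ (by omega)
    have h1' : 2 * (d:ℝ) * x + (N % (2 * d) : ℕ) = N := by exact_mod_cast h1
    have h2' : ((N % (2 * d) : ℕ) : ℝ) < 2 * d := by exact_mod_cast h2
    rw [sub_le_iff_le_add, div_le_iff₀ (show (0:ℝ) < 2*d by positivity)]
    nlinarith
  have hx4 : (N : ℝ) / (4 * d) ≤ (x : ℝ) := by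
    have h2 : (256 : ℝ) * d ≤ N := by exact_mod_cast hdN
    have : (1:ℝ) ≤ (N:ℝ)/(4*d) := by rw [le_div_iff₀ (by positivity)]; nlinarith
    have h3 : (N:ℝ)/(2*d) = 2 * ((N:ℝ)/(4*d)) := by field_simp; ring
    nlinarith [hxr]
  -- sqrt bounds
  have hs1 : Real.sqrt x - 1 ≤ (s : ℝ) := by
    have h4 : x < (s + 1) ^ 2 := by
      have := Nat.lt_succ_sqrt x
      rw [pow_two]; exact this
    have h4' : (x : ℝ) < ((s:ℝ) + 1) ^ 2 := by exact_mod_cast h4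
    have := Real.sqrt_lt_sqrt (by positivity) h4'
    rw [Real.sqrt_sq (by positivity)] at this
    linarith
  have hsq : (11 : ℝ) ≤ Real.sqrt x := by
    have h121 : (121 : ℝ) ≤ (x : ℝ) := by exact_mod_cast le_trans (by norm_num) hx128
    have := Real.sqrt_le_sqrt h121
    rwa [show (121:ℝ) = 11^2 by norm_num, Real.sqrt_sq (by norm_num)] at this
  -- r ≥ (s-1)/2
  have hrs : ((s : ℝ) - 1) / 2 ≤ (r : ℝ) := by
    have h5 : s ≤ 2 * r + 1 := by omega
    have h5' : (s : ℝ) ≤ 2 * r + 1 := by exact_mod_cast h5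
    linarith
  have hr4 : Real.sqrt x / 4 ≤ (r : ℝ) := by
    have : (Real.sqrt x - 2) / 2 ≤ (r : ℝ) := by linarith
    linarith
  have hxnn : (0:ℝ) ≤ (x:ℝ) := by positivity
  have hfin : (x : ℝ) / 16 ≤ (r : ℝ) ^ 2 := by
    nlinarith [Real.sq_sqrt hxnn, Real.sqrt_nonneg (x:ℝ)]
  calc (N : ℝ) / (64 * d) = ((N : ℝ) / (4 * d)) / 16 := by ring
    _ ≤ (x : ℝ) / 16 := by linarith
    _ ≤ (r : ℝ) ^ 2 := hfin
section aux

variable (N : ℕ)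

private def radius (N d : ℕ) : ℕ := Nat.sqrt (N / (2 * d)) / 2

private def SFset (N : ℕ) : Finset ℕ := (Icc 1 (N / 256)).filter Squarefree

private def Wset (N : ℕ) : Finset ((_ : ℕ) × ℕ × ℕ) :=
  (SFset N).sigma (fun d => Icc (radius N d + 1) (2 * radius N d) ×ˢ Icc 1 (radius N d))

private def pyth (x : (_ : ℕ) × ℕ × ℕ) : ℤ × ℤ × ℤ :=
  ((x.1 : ℤ) * ((x.2.1 : ℤ) ^ 2 - (x.2.2 : ℤ) ^ 2),
   2 * (x.1 : ℤ) * (x.2.1 : ℤ) * (x.2.2 : ℤ),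
   (x.1 : ℤ) * ((x.2.1 : ℤ) ^ 2 + (x.2.2 : ℤ) ^ 2))

private lemma mem_unpack {N : ℕ} {x : (_ : ℕ) × ℕ × ℕ} (hx : x ∈ Wset N) :
    Squarefree x.1 ∧ 1 ≤ x.1 ∧ 256 * x.1 ≤ N ∧
    1 ≤ x.2.2 ∧ x.2.2 < x.2.1 ∧ x.1 * (x.2.1 ^ 2 + x.2.2 ^ 2) ≤ N := by
  obtain ⟨d, m, n⟩ := x
  dsimp only
  simp only [Wset, SFset, Finset.mem_sigma, Finset.mem_filter, Finset.mem_Icc,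
    Finset.mem_product] at hx
  obtain ⟨⟨⟨hd1, hdK⟩, hsf⟩, ⟨hm1, hm2⟩, hn1, hn2⟩ := hx
  have hdN : 256 * d ≤ N := by
    have := Nat.div_mul_le_self N 256
    calc 256 * d ≤ 256 * (N / 256) := by omega
      _ = (N / 256) * 256 := by ring
      _ ≤ N := Nat.div_mul_le_self N 256
  refine ⟨hsf, hd1, hdN, hn1, by omega, ?_⟩
  set s := Nat.sqrt (N / (2 * d)) with hs
  have hms : m ≤ s := by
    have : 2 * (s / 2) ≤ s := by omega
    unfold radius at hm2
    omega
  have hns : n ≤ s := by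
    unfold radius at hn2
    omega
  have hss : s * s ≤ N / (2 * d) := by
    have := Nat.sqrt_le' (N / (2 * d))
    rwa [pow_two] at this
  have hdd : (N / (2 * d)) * (2 * d) ≤ N := Nat.div_mul_le_self N (2 * d)
  have h1 : m ^ 2 ≤ s * s := by rw [pow_two]; exact Nat.mul_le_mul hms hms
  have h2 : n ^ 2 ≤ s * s := by rw [pow_two]; exact Nat.mul_le_mul hns hns
  calc d * (m ^ 2 + n ^ 2) ≤ d * (2 * (s * s)) := Nat.mul_le_mul_left _ (by omega)
    _ = (s * s) * (2 * d) := by ring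
    _ ≤ (N / (2 * d)) * (2 * d) := Nat.mul_le_mul_right _ hss
    _ ≤ N := hdd

end aux

section aux2

private lemma sf_unique' {d e m p : ℕ} (hd : Squarefree d) (he : Squarefree e)
    (hm : 0 < m) (hp : 0 < p) (h : d * m ^ 2 = e * p ^ 2) : d = e ∧ m = p := by
  have hd0 : d ≠ 0 := hd.ne_zero
  have he0 : e ≠ 0 := he.ne_zero
  have hm0 : m ≠ 0 := hm.ne'
  have hp0 : p ≠ 0 := hp.ne'
  have key : ∀ q : ℕ, d.factorization q = e.factorization q ∧
      m.factorization q = p.factorization q := by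
    intro q
    have h1 : (d * m ^ 2).factorization = (e * p ^ 2).factorization := by rw [h]
    rw [Nat.factorization_mul hd0 (pow_ne_zero 2 hm0),
        Nat.factorization_mul he0 (pow_ne_zero 2 hp0),
        Nat.factorization_pow, Nat.factorization_pow] at h1
    have h2 := DFunLike.congr_fun h1 q
    simp only [Finsupp.add_apply, Finsupp.smul_apply, smul_eq_mul] at h2
    have h3 := hd.natFactorization_le_one q
    have h4 := he.natFactorization_le_one q
    omega
  exact ⟨Nat.eq_of_factorization_eq hd0 he0 fun q => (key q).1,
         Nat.eq_of_factorization_eq hm0 hp0 fun q => (key q).2⟩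

private lemma pyth_maps {N : ℕ} {x : (_ : ℕ) × ℕ × ℕ} (hx : x ∈ Wset N) :
    pyth x ∈ (((Finset.Icc (-(N : ℤ)) N) ×ˢ (Finset.Icc (-(N : ℤ)) N) ×ˢ
          (Finset.Icc (-(N : ℤ)) N)).filter
          (fun t => t.1 ^ 2 + t.2.1 ^ 2 = t.2.2 ^ 2 ∧ t.2.2 ≠ 0)) := by
  obtain ⟨hsf, hd1, hdN, hn1, hnm, hcN⟩ := mem_unpack hx
  obtain ⟨d, m, n⟩ := x
  dsimp only at hd1 hdN hn1 hnm hcN ⊢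
  have hd1' : (1 : ℤ) ≤ (d : ℤ) := by exact_mod_cast hd1
  have hn1' : (1 : ℤ) ≤ (n : ℤ) := by exact_mod_cast hn1
  have hnm' : (n : ℤ) < (m : ℤ) := by exact_mod_cast hnm
  have hcN' : (d : ℤ) * ((m : ℤ) ^ 2 + (n : ℤ) ^ 2) ≤ (N : ℤ) := by exact_mod_cast hcN
  simp only [pyth, Finset.mem_filter, Finset.mem_product, Finset.mem_Icc]
  refine ⟨⟨⟨?_, ?_⟩, ⟨?_, ?_⟩, ?_, ?_⟩, by ring, ?_⟩
  · nlinarith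
  · nlinarith
  · nlinarith [sq_nonneg ((m:ℤ) - n), sq_nonneg ((m:ℤ) + n)]
  · nlinarith [sq_nonneg ((m:ℤ) - n)]
  · nlinarith
  · nlinarith
  · positivity

private lemma pyth_inj {N : ℕ} : Set.InjOn pyth (Wset N : Set ((_ : ℕ) × ℕ × ℕ)) := by
  rintro ⟨d, m, n⟩ hx ⟨e, p, q⟩ hy heq
  obtain ⟨hsfd, hd1, -, hn1, hnm, -⟩ := mem_unpack hx
  obtain ⟨hsfe, he1, -, hq1, hqp, -⟩ := mem_unpack hy
  dsimp only at hsfd hd1 hn1 hnm hsfe he1 hq1 hqp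
  simp only [pyth, Prod.mk.injEq] at heq
  obtain ⟨h1, h2, h3⟩ := heq
  have hm2 : 2 * ((d : ℤ) * (m : ℤ) ^ 2) = 2 * ((e : ℤ) * (p : ℤ) ^ 2) := by
    linear_combination h1 + h3
  have hn2 : 2 * ((d : ℤ) * (n : ℤ) ^ 2) = 2 * ((e : ℤ) * (q : ℤ) ^ 2) := by
    linear_combination h3 - h1
  have hm2c : 2 * (d * m ^ 2) = 2 * (e * p ^ 2) := by exact_mod_cast hm2
  have hn2c : 2 * (d * n ^ 2) = 2 * (e * q ^ 2) := by exact_mod_cast hn2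
  have hm2' : d * m ^ 2 = e * p ^ 2 := by omega
  have hn2' : d * n ^ 2 = e * q ^ 2 := by omega
  obtain ⟨hde, hmp⟩ := sf_unique' hsfd hsfe (by omega) (by omega) hm2'
  obtain ⟨-, hnq⟩ := sf_unique' hsfd hsfe (by omega) (by omega) hn2'
  subst hde; subst hmp; subst hnq
  rfl

private lemma Wset_card (N : ℕ) :
    (Wset N).card = ∑ d ∈ SFset N, radius N d * radius N d := by
  rw [Wset, Finset.card_sigma]
  refine Finset.sum_congr rfl fun d _ => ?_
  rw [Finset.card_product, Nat.card_Icc, Nat.card_Icc]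
  have h1 : 2 * radius N d + 1 - (radius N d + 1) = radius N d := by omega
  have h2 : radius N d + 1 - 1 = radius N d := by omega
  rw [h1, h2]

end aux2

/-- The number of integer solutions of a² + b² = c², c ≠ 0, with
|a|, |b|, |c| ≤ N is at least k₂ · N · log N for large N. -/
theorem stmt_6 :
    ∃ k₂ : ℝ, 0 < k₂ ∧ ∃ N₀ : ℕ, ∀ N : ℕ, N₀ ≤ N →
      k₂ * N * Real.log N ≤
        ((((Finset.Icc (-(N : ℤ)) N) ×ˢ (Finset.Icc (-(N : ℤ)) N) ×ˢ
          (Finset.Icc (-(N : ℤ)) N)).filter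
          (fun t => t.1 ^ 2 + t.2.1 ^ 2 = t.2.2 ^ 2 ∧ t.2.2 ≠ 0)).card : ℝ) := by
  refine ⟨1/256, by norm_num, 1000000, fun N hN => ?_⟩
  have hN0 : (1000000 : ℝ) ≤ (N : ℝ) := by exact_mod_cast hN
  have hNpos : (0 : ℝ) < N := by linarith
  set K := N / 256 with hK
  -- cardinality bound via the injection
  have hcard : (Wset N).card ≤
      ((((Finset.Icc (-(N : ℤ)) N) ×ˢ (Finset.Icc (-(N : ℤ)) N) ×ˢ
          (Finset.Icc (-(N : ℤ)) N)).filter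
          (fun t => t.1 ^ 2 + t.2.1 ^ 2 = t.2.2 ^ 2 ∧ t.2.2 ≠ 0)).card) :=
    Finset.card_le_card_of_injOn pyth (fun x hx => pyth_maps hx) pyth_inj
  -- log N ≥ 12
  have hexp : Real.exp 12 ≤ (N : ℝ) := by
    have h1 : Real.exp 1 ≤ 2.7182818286 := Real.exp_one_lt_d9.le
    have h2 : Real.exp 12 = Real.exp 1 ^ (12 : ℕ) := by
      rw [← Real.exp_nat_mul]; norm_num
    have h3 : Real.exp 1 ^ (12 : ℕ) ≤ 2.7182818286 ^ (12 : ℕ) :=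
      pow_le_pow_left₀ (Real.exp_pos 1).le h1 _
    have h4 : (2.7182818286 : ℝ) ^ (12 : ℕ) ≤ 1000000 := by norm_num
    linarith [h2 ▸ h3]
  have hlogN : (12 : ℝ) ≤ Real.log N := by
    rw [Real.le_log_iff_exp_le hNpos]; exact hexp
  have hlogNpos : (0 : ℝ) < Real.log N := by linarith
  -- log 256 ≤ 6
  have hlog256 : Real.log 256 ≤ 6 := by
    have h1 : Real.log 2 ≤ 0.6931471808 := Real.log_two_lt_d9.le
    have h2 : (256 : ℝ) = 2 ^ (8 : ℕ) := by norm_num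
    rw [h2, Real.log_pow]
    push_cast
    linarith
  -- log (K+1) ≥ log N / 2
  have hK1 : (N : ℝ) / 256 ≤ (K : ℝ) + 1 := by
    have h1 : N < 256 * (K + 1) := by
      have := Nat.div_add_mod N 256
      have := Nat.mod_lt N (show 0 < 256 by norm_num)
      omega
    have h1' : (N : ℝ) < 256 * ((K : ℝ) + 1) := by exact_mod_cast h1
    linarith
  have hlogK : Real.log N / 2 ≤ Real.log ((K : ℝ) + 1) := by
    have h1 : Real.log ((N : ℝ) / 256) ≤ Real.log ((K : ℝ) + 1) :=
      Real.log_le_log (by positivity) hK1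
    rw [Real.log_div (by positivity) (by norm_num)] at h1
    linarith
  -- termwise bound
  have hterm : ∀ d ∈ SFset N, (N : ℝ) / 64 * (d : ℝ)⁻¹ ≤ ((radius N d : ℕ) : ℝ) ^ 2 := by
    intro d hd
    simp only [SFset, Finset.mem_filter, Finset.mem_Icc] at hd
    obtain ⟨⟨hd1, hdK⟩, hsf⟩ := hd
    have hdN : 256 * d ≤ N := by
      have := Nat.div_mul_le_self N 256
      calc 256 * d ≤ 256 * K := by omega
        _ = K * 256 := by ring
        _ ≤ N := Nat.div_mul_le_self N 256
    have := term_lb hd1 hdN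
    have hdpos : (0 : ℝ) < d := by exact_mod_cast hd1
    have heq : (N : ℝ) / (64 * d) = (N : ℝ) / 64 * (d : ℝ)⁻¹ := by
      field_simp
    rw [heq] at this
    exact this
  calc (1/256 : ℝ) * N * Real.log N
      = (N : ℝ) / 128 * (Real.log N / 2) := by ring
    _ ≤ (N : ℝ) / 128 * Real.log ((K : ℝ) + 1) := by
        apply mul_le_mul_of_nonneg_left hlogK (by positivity)
    _ ≤ (N : ℝ) / 128 * ∑ n ∈ Finset.Icc 1 K, (n : ℝ)⁻¹ := by
        apply mul_le_mul_of_nonneg_left (harmonic_lb K) (by positivity)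
    _ ≤ (N : ℝ) / 128 * (2 * ∑ d ∈ SFset N, (d : ℝ)⁻¹) := by
        apply mul_le_mul_of_nonneg_left (sf_sum_lb K) (by positivity)
    _ = (N : ℝ) / 64 * ∑ d ∈ SFset N, (d : ℝ)⁻¹ := by ring
    _ = ∑ d ∈ SFset N, (N : ℝ) / 64 * (d : ℝ)⁻¹ := Finset.mul_sum _ _ _
    _ ≤ ∑ d ∈ SFset N, ((radius N d : ℕ) : ℝ) ^ 2 := Finset.sum_le_sum hterm
    _ = ((Wset N).card : ℝ) := by
        rw [Wset_card]
        push_cast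
        refine Finset.sum_congr rfl fun d _ => ?_
        ring
    _ ≤ _ := by exact_mod_cast hcard
end
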